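/- arXiv:1009.5063 — 4 statements merged into one kernel-verified Lean document; each statement's English description precedes it below -/
import Mathlib

section
/- Let A = (a_{ij}) be a finitely supported matrix of non-negative integers with l(A) ≥ 1, and define the weighted lower sum sequence wls(A)_i = Σ_{i' ≥ i, j ≥ 1} j·a_{i'j}. Then for every i ≥ 1, δ(A) ≥ wls(A)_i + l(A) − 1, where δ(A) = Σ_{i,j} i·j·a_{ij} and l(A) is the largest row index of a non-zero entry. -/
/-- A matrix `A = (a_{ij})_{i,j≥1}` with non-negative integer entries and finite support,
encoded as a finitely supported function `ℕ × ℕ →₀ ℕ` whose support consists of pairs of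
positive indices. -/
def MatOK (A : ℕ × ℕ →₀ ℕ) : Prop := ∀ p ∈ A.support, 1 ≤ p.1 ∧ 1 ≤ p.2

/-- The cogenus `δ(A) = Σ_{i,j≥1} i·j·a_{ij}`. -/
def mdelta (A : ℕ × ℕ →₀ ℕ) : ℕ := A.sum fun p v => p.1 * p.2 * v

/-- `l(A)`: the largest row index of a non-zero entry of `A` (`0` for the zero matrix). -/
def rowLen (A : ℕ × ℕ →₀ ℕ) : ℕ := A.support.sup fun p => p.1

/-- The weighted lower sum sequence `wls(A)_i = Σ_{i' ≥ i, j ≥ 1} j·a_{i'j}`. -/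
def wls (A : ℕ × ℕ →₀ ℕ) (i : ℕ) : ℕ :=
  A.sum fun p v => if i ≤ p.1 then p.2 * v else 0

/-! Since every row index is at least `1`, `δ(A)` exceeds `wls(A)_0 = Σ j·a_{ij}` by
`Σ (i - 1)·j·a_{ij}`, and a single non-zero entry in the last row `l(A)` already contributes at
least `l(A) - 1` to this excess; and `wls(A)_i ≤ wls(A)_0` as `wls(A)` is antitone. -/

theorem wls_antitone (A : ℕ × ℕ →₀ ℕ) : Antitone (wls A) := by
  intro i i' hii'
  refine Finset.sum_le_sum fun p _ => ?_
  by_cases h : i' ≤ p.1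
  · simp only [h, hii'.trans h, if_true, le_refl]
  · simp only [h, if_false, zero_le]

theorem wls_zero (A : ℕ × ℕ →₀ ℕ) : wls A 0 = A.sum fun p v => p.2 * v := by
  simp only [wls, zero_le, if_true]

theorem mdelta_eq_wls_zero_add {A : ℕ × ℕ →₀ ℕ} (hA : MatOK A) :
    mdelta A = wls A 0 + A.sum fun p v => (p.1 - 1) * p.2 * v := by
  rw [wls_zero, mdelta, ← Finsupp.sum_add]
  refine Finset.sum_congr rfl fun p hp => ?_
  obtain ⟨k, hk⟩ := Nat.exists_eq_add_of_le' (hA p hp).1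
  simp only [hk, Nat.add_sub_cancel]
  ring

theorem rowLen_sub_one_le {A : ℕ × ℕ →₀ ℕ} (hA : MatOK A) :
    rowLen A - 1 ≤ A.sum fun p v => (p.1 - 1) * p.2 * v := by
  rcases A.support.eq_empty_or_nonempty with hempty | hne
  · simp [rowLen, hempty]
  obtain ⟨p, hp, hmax⟩ := Finset.exists_mem_eq_sup A.support hne fun p => p.1
  have hweight : 0 < p.2 * A p :=
    Nat.mul_pos (hA p hp).2 (Nat.pos_of_ne_zero (Finsupp.mem_support_iff.mp hp))
  calc rowLen A - 1 = p.1 - 1 := by rw [rowLen, hmax]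
    _ ≤ (p.1 - 1) * (p.2 * A p) := Nat.le_mul_of_pos_right _ hweight
    _ = (p.1 - 1) * p.2 * A p := (mul_assoc _ _ _).symm
    _ ≤ A.sum fun p v => (p.1 - 1) * p.2 * v :=
      Finset.single_le_sum (f := fun p => (p.1 - 1) * p.2 * A p) (fun _ _ => Nat.zero_le _) hp

theorem mdelta_ge_wls_add_rowLen_general (A : ℕ × ℕ →₀ ℕ) (hA : MatOK A)
    (i : ℕ) : wls A i + rowLen A ≤ mdelta A + 1 := by
  have hwls : wls A i ≤ wls A 0 := wls_antitone A (Nat.zero_le i)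
  have hexcess := rowLen_sub_one_le hA
  rw [mdelta_eq_wls_zero_add hA]
  omega

/-- For a non-zero finitely supported non-negative integer matrix `A` (so `l(A) ≥ 1`),
for every `i ≥ 1` one has `δ(A) ≥ wls(A)_i + l(A) − 1`. -/
theorem mdelta_ge_wls_add_rowLen (A : ℕ × ℕ →₀ ℕ) (hA : MatOK A) (hl : 1 ≤ rowLen A)
    (i : ℕ) (hi : 1 ≤ i) : wls A i + rowLen A ≤ mdelta A + 1 :=
  mdelta_ge_wls_add_rowLen_general A hA i
end

section
/- For every extended template (Λ, A, B), one has d_min(Λ, A, B) − s(Λ, A, B) ≤ δ(Λ) + δ(A) + δ(B) + 1, where d_min(Λ,A,B) = max_{1≤i≤l(Λ)} ( l(Λ) − i + 1 + κ_i(Λ) + wls(A)_{l(Λ)+1−i} + wls(B)_{l(Λ)+1−i} ), i₀ is the smallest index attaining the maximum, and s(Λ,A,B) is the number of edges of Λ from i₀ − 1 to i₀. -/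
/-!
Write `n = l(Λ) − i₀`, so that the `i₀`-th term of `d_min` is
`n + 1 + κ_{i₀} + wls(A)_{n+1} + wls(B)_{n+1}`.
Every entry counted in `wls(A)_{n+1}` sits in a row `≥ n + 1`, so `(n + 1)·wls(A)_{n+1} ≤ δ(A)`;
this pays for `min(n, l(A)) + wls(A)_{n+1}`, and likewise for `B`.
The remaining `n − max(l(A), l(B))` vertices `i₀ < j ≤ l(Λ) − max(l(A), l(B))` each lie strictly
inside an edge of `Λ`. An edge `i → k` of weight `w` contributes `(k − i)·w − 1` to `δ(Λ)`, which
covers its share `w` of `κ_{i₀}` (if it spans `i₀`) plus the vertices beyond `i₀` that it covers,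
with a deficit of one exactly when the edge is `i₀ − 1 → i₀`.
-/
open scoped Classical

/-- The 1-norm `‖A‖₁ = Σ_{i,j} a_{ij}`. -/
def mnorm (A : ℕ × ℕ →₀ ℕ) : ℕ := A.sum fun _ v => v

/-- The cogenus of a multiset of weighted edges `(i,j,w)`: each edge contributes
`(j − i)·w − 1`. -/
def edgesDelta (E : Multiset (ℕ × ℕ × ℕ)) : ℕ :=
  (E.map fun e => (e.2.1 - e.1) * e.2.2 - 1).sum

/-- `κ_j`: the total weight of the edges `i → k` with `i < j ≤ k`. -/
def edgesKappa (E : Multiset (ℕ × ℕ × ℕ)) (j : ℕ) : ℕ :=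
  ((E.filter fun e => e.1 < j ∧ j ≤ e.2.1).map fun e => e.2.2).sum

/-- The data of an extended template: a directed multigraph `Λ` on vertices `{0,…,l}`
(the edge `(i,j,w)` goes from `i` to `j` and has weight `w`), together with two
finitely supported non-negative integer matrices `A` and `B`. -/
structure PreExtTemplate where
  l : ℕ
  edges : Multiset (ℕ × ℕ × ℕ)
  A : ℕ × ℕ →₀ ℕ
  B : ℕ × ℕ →₀ ℕ

/-- `(Λ, A, B)` is an extended template: edges of `Λ` go from smaller to larger vertices
(within `{0,…,l}`) and have positive weight, length-one edges have weight `≥ 2`, the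
matrices are supported on positive indices with `l(Λ) ≥ max(l(A), l(B))`, and every
vertex `j` with `1 ≤ j ≤ l(Λ) − max(l(A), l(B))` is covered by an edge `i → k` of `Λ`
with `i < j < k`. -/
def IsExtTemplate (T : PreExtTemplate) : Prop :=
  (∀ e ∈ T.edges, e.1 < e.2.1 ∧ e.2.1 ≤ T.l ∧ 1 ≤ e.2.2) ∧
  (∀ e ∈ T.edges, e.2.1 = e.1 + 1 → 2 ≤ e.2.2) ∧
  MatOK T.A ∧ MatOK T.B ∧
  max (rowLen T.A) (rowLen T.B) ≤ T.l ∧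
  (∀ j, 1 ≤ j → j + max (rowLen T.A) (rowLen T.B) ≤ T.l →
    ∃ e ∈ T.edges, e.1 < j ∧ j < e.2.1)

/-- The quantity `l(Λ) − i + 1 + κ_i(Λ) + wls(A)_{l(Λ)+1−i} + wls(B)_{l(Λ)+1−i}`
whose maximum over `1 ≤ i ≤ l(Λ)` is `d_min(Λ, A, B)`. -/
def gfun (T : PreExtTemplate) (i : ℕ) : ℕ :=
  T.l - i + 1 + edgesKappa T.edges i + wls T.A (T.l + 1 - i) + wls T.B (T.l + 1 - i)

/-- `d_min(Λ, A, B) = max_{1 ≤ i ≤ l(Λ)} (l(Λ) − i + 1 + κ_i(Λ) + wls(A)_{l+1−i} + wls(B)_{l+1−i})`. -/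
def dMin (T : PreExtTemplate) : ℕ := (Finset.Icc 1 T.l).sup (gfun T)

namespace Multiset

theorem sum_map_filter {α M : Type*} [AddCommMonoid M] (s : Multiset α) (p : α → Prop)
    [DecidablePred p] (f : α → M) :
    ((s.filter p).map f).sum = (s.map fun a => if p a then f a else 0).sum := by
  induction s using Multiset.induction with
  | empty => simp
  | cons a s ih => by_cases h : p a <;> simp [h, ih]

theorem card_filter_eq_sum_map {α : Type*} (s : Multiset α) (p : α → Prop) [DecidablePred p] :
    card (s.filter p) = (s.map fun a => if p a then 1 else 0).sum := by
  simpa using sum_map_filter s p fun _ => (1 : ℕ)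

theorem card_le_sum_map_card_filter {α β : Type*} (s : Multiset α) (S : Finset β)
    (P : α → β → Prop) [∀ a, DecidablePred (P a)] (hS : ∀ b ∈ S, ∃ a ∈ s, P a b) :
    S.card ≤ (s.map fun a => (S.filter (P a)).card).sum := by
  induction s using Multiset.induction generalizing S with
  | empty => simp [Finset.eq_empty_of_forall_notMem fun b hb => by simpa using hS b hb]
  | cons a s ih =>
    have hrest : ∀ b ∈ S.filter fun b => ¬ P a b, ∃ a' ∈ s, P a' b := by
      intro b hb
      obtain ⟨hbS, hb⟩ := Finset.mem_filter.mp hb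
      obtain ⟨a', ha', hP⟩ := hS b hbS
      exact ⟨a', (Multiset.mem_cons.mp ha').resolve_left (by rintro rfl; exact hb hP), hP⟩
    calc S.card = (S.filter (P a)).card + (S.filter fun b => ¬ P a b).card :=
          (Finset.card_filter_add_card_filter_not _).symm
      _ ≤ (S.filter (P a)).card +
            (s.map fun a' => ((S.filter fun b => ¬ P a b).filter (P a')).card).sum :=
          Nat.add_le_add_left (ih _ hrest) _
      _ ≤ (S.filter (P a)).card + (s.map fun a' => (S.filter (P a')).card).sum := by
          gcongr
          exact Multiset.sum_map_le_sum_map _ _ fun a' _ => Finset.card_le_card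
            (Finset.filter_subset_filter (P a') (Finset.filter_subset _ S))
      _ = ((a ::ₘ s).map fun a' => (S.filter (P a')).card).sum := by simp

end Multiset

theorem edgesKappa_eq_sum_map (E : Multiset (ℕ × ℕ × ℕ)) (j : ℕ) :
    edgesKappa E j = (E.map fun e => if e.1 < j ∧ j ≤ e.2.1 then e.2.2 else 0).sum :=
  Multiset.sum_map_filter _ _ _

/-- The charge on one edge `i → k` of weight `w`, where `c` counts the vertices `j > i₀`
with `i < j < k`. -/
theorem edge_charge_le {i k w i0 c : ℕ} (hik : i < k) (hw : 1 ≤ w)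
    (hc : c ≤ k - max i i0 - 1) :
    (if i < i0 ∧ i0 ≤ k then w else 0) + c ≤
      (k - i) * w - 1 + if i = i0 - 1 ∧ k = i0 then 1 else 0 := by
  have hd : 1 ≤ k - i := by omega
  have hdw : (k - i) + w ≤ (k - i) * w + 1 := by nlinarith
  have hw_le : w ≤ (k - i) * w := Nat.le_mul_of_pos_left w hd
  split_ifs <;> omega

theorem edgesKappa_add_card_le (E : Multiset (ℕ × ℕ × ℕ)) (i0 : ℕ) (S : Finset ℕ)
    (hE : ∀ e ∈ E, e.1 < e.2.1 ∧ 1 ≤ e.2.2) (hS : ∀ j ∈ S, i0 < j)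
    (hcov : ∀ j ∈ S, ∃ e ∈ E, e.1 < j ∧ j < e.2.1) :
    edgesKappa E i0 + S.card ≤
      edgesDelta E + Multiset.card (E.filter fun e => e.1 = i0 - 1 ∧ e.2.1 = i0) := by
  have hcount : ∀ e : ℕ × ℕ × ℕ,
      (S.filter fun j => e.1 < j ∧ j < e.2.1).card ≤ e.2.1 - max e.1 i0 - 1 := by
    intro e
    rw [← Nat.card_Ioo]
    refine Finset.card_le_card fun j hj => ?_
    obtain ⟨hjS, h1, h2⟩ := Finset.mem_filter.mp hj
    exact Finset.mem_Ioo.mpr ⟨max_lt h1 (hS j hjS), h2⟩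
  calc edgesKappa E i0 + S.card
      ≤ (E.map fun e => if e.1 < i0 ∧ i0 ≤ e.2.1 then e.2.2 else 0).sum +
          (E.map fun e => (S.filter fun j => e.1 < j ∧ j < e.2.1).card).sum := by
        rw [edgesKappa_eq_sum_map]
        exact Nat.add_le_add_left (Multiset.card_le_sum_map_card_filter E S _ hcov) _
    _ = (E.map fun e => (if e.1 < i0 ∧ i0 ≤ e.2.1 then e.2.2 else 0) +
          (S.filter fun j => e.1 < j ∧ j < e.2.1).card).sum := Multiset.sum_map_add.symm
    _ ≤ (E.map fun e => ((e.2.1 - e.1) * e.2.2 - 1) +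
          if e.1 = i0 - 1 ∧ e.2.1 = i0 then 1 else 0).sum :=
        Multiset.sum_map_le_sum_map _ _ fun e he =>
          edge_charge_le (hE e he).1 (hE e he).2 (hcount e)
    _ = edgesDelta E + Multiset.card (E.filter fun e => e.1 = i0 - 1 ∧ e.2.1 = i0) := by
        rw [Multiset.sum_map_add, Multiset.card_filter_eq_sum_map, edgesDelta]

section Matrices

variable {A : ℕ × ℕ →₀ ℕ}

variable (A) in
theorem mul_wls_le_mdelta (n : ℕ) : n * wls A n ≤ mdelta A := by
  rw [wls, mdelta, Finsupp.sum, Finsupp.sum, Finset.mul_sum]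
  refine Finset.sum_le_sum fun p _ => ?_
  split_ifs with h
  · rw [mul_assoc p.1]
    exact Nat.mul_le_mul_right _ h
  · simp

theorem wls_eq_zero_of_rowLen_lt {n : ℕ} (h : rowLen A < n) : wls A n = 0 :=
  Finset.sum_eq_zero fun _ hp =>
    if_neg (not_le.mpr (lt_of_le_of_lt (Finset.le_sup (f := Prod.fst) hp) h))

theorem wls_pos (hA : MatOK A) {n : ℕ} (hn : n ≤ rowLen A) (hA0 : A ≠ 0) : 0 < wls A n := by
  obtain ⟨p, hp, hpmax⟩ := Finset.exists_mem_eq_sup A.support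
    (Finsupp.support_nonempty_iff.mpr hA0) Prod.fst
  have hpos : 0 < p.2 * A p := Nat.mul_pos (hA p hp).2 (Nat.pos_of_ne_zero (by simpa using hp))
  calc 0 < if n ≤ p.1 then p.2 * A p else 0 := by rwa [if_pos (hpmax ▸ hn)]
    _ ≤ wls A n :=
      Finset.single_le_sum (f := fun p : ℕ × ℕ => if n ≤ p.1 then p.2 * A p else 0)
        (fun _ _ => Nat.zero_le _) hp

theorem min_rowLen_add_wls_le_mdelta (hA : MatOK A) (n : ℕ) :
    min n (rowLen A) + wls A (n + 1) ≤ mdelta A := by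
  rcases eq_or_ne A 0 with rfl | hA0
  · simp [rowLen, wls]
  rcases le_or_gt (rowLen A) n with hle | hlt
  · have hpos := wls_pos hA le_rfl hA0
    have := mul_wls_le_mdelta A (rowLen A)
    rw [min_eq_right hle, wls_eq_zero_of_rowLen_lt (Nat.lt_succ_of_le hle)]
    nlinarith
  · have hpos := wls_pos hA hlt hA0
    have := mul_wls_le_mdelta A (n + 1)
    rw [min_eq_left hlt.le]
    nlinarith

end Matrices

theorem dMin_le_general (T : PreExtTemplate) (hT : IsExtTemplate T) (i0 : ℕ)
    (hi0r : i0 ≤ T.l) (hi0max : gfun T i0 = dMin T) :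
    dMin T ≤ edgesDelta T.edges + mdelta T.A + mdelta T.B + 1 +
      Multiset.card (T.edges.filter fun e => e.1 = i0 - 1 ∧ e.2.1 = i0) := by
  obtain ⟨hE, -, hA, hB, -, hcov⟩ := hT
  set m := max (rowLen T.A) (rowLen T.B)
  have hκ := edgesKappa_add_card_le T.edges i0 (Finset.Icc (i0 + 1) (T.l - m))
    (fun e he => ⟨(hE e he).1, (hE e he).2.2⟩)
    (fun j hj => by have := Finset.mem_Icc.mp hj; omega)
    (fun j hj => by have := Finset.mem_Icc.mp hj; exact hcov j (by omega) (by omega))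
  rw [Nat.card_Icc] at hκ
  have hwA := min_rowLen_add_wls_le_mdelta hA (T.l - i0)
  have hwB := min_rowLen_add_wls_le_mdelta hB (T.l - i0)
  rw [← hi0max, gfun, show T.l + 1 - i0 = T.l - i0 + 1 by omega]
  omega

/-- For every extended template `(Λ, A, B)`:
`d_min(Λ,A,B) − s(Λ,A,B) ≤ δ(Λ) + δ(A) + δ(B) + 1`, where `i₀` is the smallest index
attaining the maximum defining `d_min`, and `s(Λ,A,B)` is the number of edges of `Λ`
from `i₀ − 1` to `i₀`.  (Stated in the subtraction-free form
`d_min ≤ δ(Λ) + δ(A) + δ(B) + 1 + s`.) -/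
theorem dMin_le (T : PreExtTemplate) (hT : IsExtTemplate T) (i0 : ℕ)
    (hi0l : 1 ≤ i0) (hi0r : i0 ≤ T.l) (hi0max : gfun T i0 = dMin T)
    (hi0least : ∀ i, 1 ≤ i → i < i0 → gfun T i < dMin T) :
    dMin T ≤ edgesDelta T.edges + mdelta T.A + mdelta T.B + 1 +
      Multiset.card (T.edges.filter fun e => e.1 = i0 - 1 ∧ e.2.1 = i0) :=
  dMin_le_general T hT i0 hi0r hi0max
end

section
/- For every extended template (Λ, A, B), the length satisfies l(Λ) ≤ δ(Λ) + δ(A) + δ(B). -/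
open scoped Classical

/-!
The vertices `1, …, l(Λ) − max(l(A), l(B))` are all covered by edges of `Λ`, and an edge
`i → k` of weight `w` covers only the `k − i − 1 ≤ (k − i)·w − 1` vertices strictly between
its ends, so `l(Λ) − max(l(A), l(B)) ≤ δ(Λ)`. Since every non-zero entry `a_{ij}` has
`i ≤ i·j·a_{ij}`, also `l(A) ≤ δ(A)` and `l(B) ≤ δ(B)`.
-/

lemma Multiset.card_toFinset_biUnion_le_sum_map {α β : Type*} [DecidableEq α] [DecidableEq β]
    (s : Multiset α) (t : α → Finset β) :
    (s.toFinset.biUnion t).card ≤ (s.map fun a => (t a).card).sum := by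
  induction s using Multiset.induction_on with
  | empty => simp
  | cons a s ih =>
    rw [Multiset.toFinset_cons, Finset.biUnion_insert, Multiset.map_cons, Multiset.sum_cons]
    exact (Finset.card_union_le _ _).trans (Nat.add_le_add_left ih _)

lemma card_biUnion_Ioo_le_edgesDelta (E : Multiset (ℕ × ℕ × ℕ)) (hw : ∀ e ∈ E, 1 ≤ e.2.2) :
    (E.toFinset.biUnion fun e => Finset.Ioo e.1 e.2.1).card ≤ edgesDelta E := by
  refine (E.card_toFinset_biUnion_le_sum_map _).trans (Multiset.sum_map_le_sum_map _ _ ?_)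
  intro e he
  have : e.2.1 - e.1 ≤ (e.2.1 - e.1) * e.2.2 := Nat.le_mul_of_pos_right _ (hw e he)
  rw [Nat.card_Ioo]
  omega

lemma rowLen_le_mdelta (A : ℕ × ℕ →₀ ℕ) (hA : MatOK A) : rowLen A ≤ mdelta A := by
  refine Finset.sup_le fun p hp => ?_
  have hAp : 1 ≤ A p := Nat.one_le_iff_ne_zero.mpr (Finsupp.mem_support_iff.mp hp)
  calc p.1 ≤ p.1 * p.2 := Nat.le_mul_of_pos_right _ (hA p hp).2
    _ ≤ p.1 * p.2 * A p := Nat.le_mul_of_pos_right _ hAp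
    _ ≤ mdelta A :=
      Finset.single_le_sum (f := fun q : ℕ × ℕ => q.1 * q.2 * A q) (fun _ _ => Nat.zero_le _) hp

lemma IsExtTemplate.sub_le_edgesDelta {T : PreExtTemplate} (hT : IsExtTemplate T) :
    T.l - max (rowLen T.A) (rowLen T.B) ≤ edgesDelta T.edges := by
  obtain ⟨hedge, -, -, -, -, hcov⟩ := hT
  have hsub : Finset.Icc 1 (T.l - max (rowLen T.A) (rowLen T.B)) ⊆
      T.edges.toFinset.biUnion fun e => Finset.Ioo e.1 e.2.1 := by
    intro j hj
    rw [Finset.mem_Icc] at hj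
    obtain ⟨e, he, hij, hjk⟩ := hcov j hj.1 (by omega)
    exact Finset.mem_biUnion.mpr ⟨e, Multiset.mem_toFinset.mpr he, Finset.mem_Ioo.mpr ⟨hij, hjk⟩⟩
  simpa using (Finset.card_le_card hsub).trans
    (card_biUnion_Ioo_le_edgesDelta T.edges fun e he => (hedge e he).2.2)

/-- For every extended template `(Λ, A, B)`, the length satisfies
`l(Λ) ≤ δ(Λ) + δ(A) + δ(B)`. -/
theorem extLength_le (T : PreExtTemplate) (hT : IsExtTemplate T) :
    T.l ≤ edgesDelta T.edges + mdelta T.A + mdelta T.B := by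
  have hΛ := hT.sub_le_edgesDelta
  have hA := rowLen_le_mdelta T.A hT.2.2.1
  have hB := rowLen_le_mdelta T.B hT.2.2.2.1
  omega
end

section
/- The number of templates of cogenus 1 is exactly 2: the template on two vertices {0,1} with a single edge 0→1 of weight 2, and the template on three vertices {0,1,2} with a single edge 0→2 of weight 1. -/
/-! Edges of length one have weight at least `2`, so every edge of a template contributes at
least `1` to the cogenus. A template of cogenus `1` therefore has a single edge `i → j`, with
`(j - i) w = 2`, and since no vertex strictly between `0` and `l` may be left uncovered, this edge
must run from `0` to `l`. -/

open scoped Classical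

/-- A directed multigraph on vertices `{0,…,l}` with positive integer edge weights,
given as the length `l` together with the multiset of edges `(i, j, w)`
(an edge from `i` to `j` of weight `w`). -/
structure PreTemplate where
  l : ℕ
  edges : Multiset (ℕ × ℕ × ℕ)

/-- `Γ` is a template: `l ≥ 1`; every edge `i → j` has `i < j ≤ l` and weight `≥ 1`;
every edge of length one (from `i` to `i+1`) has weight `≥ 2`; and every vertex `j` with
`1 ≤ j ≤ l − 1` is covered by some edge `i → k` with `i < j < k`. -/
def IsTemplate (Γ : PreTemplate) : Prop :=
  1 ≤ Γ.l ∧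
  (∀ e ∈ Γ.edges, e.1 < e.2.1 ∧ e.2.1 ≤ Γ.l ∧ 1 ≤ e.2.2) ∧
  (∀ e ∈ Γ.edges, e.2.1 = e.1 + 1 → 2 ≤ e.2.2) ∧
  (∀ j, 1 ≤ j → j < Γ.l → ∃ e ∈ Γ.edges, e.1 < j ∧ j < e.2.1)

/-- The cogenus `δ(Γ) = Σ_{e : i→j} ((j−i)·w(e) − 1)` of a template. -/
def tdelta (Γ : PreTemplate) : ℕ := edgesDelta Γ.edges

/-- `κ_j(Γ)`: the total weight of edges `i → k` of `Γ` with `i < j ≤ k`. -/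
def tkappa (Γ : PreTemplate) (j : ℕ) : ℕ := edgesKappa Γ.edges j

/-- `k_min(Γ) = max_{1 ≤ j ≤ l} (κ_j(Γ) − j + 1)`. -/
def kMin (Γ : PreTemplate) : ℕ := (Finset.Icc 1 Γ.l).sup fun j => tkappa Γ j + 1 - j

/-- The template on two vertices `{0,1}` with a single edge `0 → 1` of weight `2`. -/
def templateOne : PreTemplate := ⟨1, {(0, 1, 2)}⟩

/-- The template on three vertices `{0,1,2}` with a single edge `0 → 2` of weight `1`. -/
def templateTwo : PreTemplate := ⟨2, {(0, 2, 1)}⟩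

theorem Multiset.exists_eq_singleton_of_sum_map_eq_one {α : Type*} {s : Multiset α}
    {f : α → ℕ} (hf : ∀ a ∈ s, 1 ≤ f a) (hs : (s.map f).sum = 1) : ∃ a, s = {a} ∧ f a = 1 := by
  have hcard_le : Multiset.card s ≤ 1 := by
    have h := Multiset.card_nsmul_le_sum (s := s.map f) (a := 1) (by simpa using hf)
    simpa [hs] using h
  have hcard_ne : Multiset.card s ≠ 0 := by
    rintro h
    simp [Multiset.card_eq_zero.1 h] at hs
  obtain ⟨a, rfl⟩ := Multiset.card_eq_one.1 (by omega : Multiset.card s = 1)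
  exact ⟨a, rfl, by simpa using hs⟩

theorem IsTemplate.one_le_edge_cogenus {Γ : PreTemplate} (hΓ : IsTemplate Γ) {e : ℕ × ℕ × ℕ}
    (he : e ∈ Γ.edges) : 1 ≤ (e.2.1 - e.1) * e.2.2 - 1 := by
  obtain ⟨-, hE, hE1, -⟩ := hΓ
  obtain ⟨hij, -, hw⟩ := hE e he
  rcases (by omega : e.2.1 = e.1 + 1 ∨ e.1 + 2 ≤ e.2.1) with hshort | hlong
  · have := hE1 e he hshort
    rw [hshort, add_tsub_cancel_left, one_mul]
    omega
  · have : 2 ≤ (e.2.1 - e.1) * e.2.2 := le_mul_of_le_of_one_le (by omega) hw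
    omega

theorem IsTemplate.eq_zero_and_eq_length_of_edges_eq_singleton {l i j w : ℕ}
    (hΓ : IsTemplate ⟨l, {(i, j, w)}⟩) : i = 0 ∧ j = l := by
  obtain ⟨-, hE, -, hcov⟩ := hΓ
  obtain ⟨hij, hjl, -⟩ := hE _ (Multiset.mem_singleton_self _)
  dsimp only at hij hjl hcov
  have not_covered (v : ℕ) (hv : v = i ∨ v = j) (hv1 : 1 ≤ v) (hvl : v < l) : False := by
    obtain ⟨e, he, hlt, hgt⟩ := hcov v hv1 hvl
    rw [Multiset.mem_singleton] at he
    subst he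
    dsimp only at hlt hgt
    omega
  constructor
  · by_contra hi
    exact not_covered i (.inl rfl) (by omega) (by omega)
  · by_contra hj
    exact not_covered j (.inr rfl) (by omega) (by omega)

theorem isTemplate_templateOne : IsTemplate templateOne := by
  refine ⟨le_rfl, by simp [templateOne], by simp [templateOne], fun v hv1 hv2 => ?_⟩
  exact absurd hv2 (by simp [templateOne]; omega)

theorem isTemplate_templateTwo : IsTemplate templateTwo := by
  refine ⟨by decide, by simp [templateTwo], by simp [templateTwo], fun v hv1 hv2 => ?_⟩
  have : v = 1 := by simp [templateTwo] at hv2; omega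
  exact ⟨(0, 2, 1), Multiset.mem_singleton_self _, by simp [this]⟩

/-- There are exactly two templates of cogenus `1`: the template on `{0,1}` with one
edge `0 → 1` of weight `2`, and the template on `{0,1,2}` with one edge `0 → 2` of
weight `1`. -/
theorem templates_of_cogenus_one (Γ : PreTemplate) :
    (IsTemplate Γ ∧ tdelta Γ = 1) ↔ Γ = templateOne ∨ Γ = templateTwo := by
  refine ⟨fun ⟨hΓ, hδ⟩ => ?_, ?_⟩
  · obtain ⟨⟨i, j, w⟩, hedges, hcog⟩ :=
      Multiset.exists_eq_singleton_of_sum_map_eq_one (fun _ => hΓ.one_le_edge_cogenus) hδ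
    obtain ⟨l, E⟩ := Γ
    dsimp only at hedges hcog
    subst hedges
    obtain ⟨rfl, rfl⟩ := hΓ.eq_zero_and_eq_length_of_edges_eq_singleton
    have hlw : j * w = 2 := by simp only [Nat.sub_zero] at hcog; omega
    rcases (Nat.dvd_prime Nat.prime_two).1 (Dvd.intro w hlw) with rfl | rfl
    · left
      obtain rfl : w = 2 := by omega
      rfl
    · right
      obtain rfl : w = 1 := by omega
      rfl
  · rintro (rfl | rfl)
    · exact ⟨isTemplate_templateOne, rfl⟩
    · exact ⟨isTemplate_templateTwo, rfl⟩
end
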